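/- (Gaussian upper bound.) There exist constants K, γ, α > 0 such that for all t > 0 and all z, z' ∈ ℍ², H(t, z, z') ≤ K · √(γt)/f(γt) · e^{−α d_g(z,z')²/t}, where f(t) = e^{t/4} t^{3/2}. -/

import Mathlib

open MeasureTheory Real Set

/-- Inverse hyperbolic cosine. -/
noncomputable def arcoshR (x : ℝ) : ℝ := Real.log (x + Real.sqrt (x ^ 2 - 1))

/-- The hyperbolic half-plane, as a subset of `ℝ × ℝ`. -/
def H2 : Set (ℝ × ℝ) := {z | 0 < z.2}

/-- The geodesic distance on the hyperbolic half-plane. -/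
noncomputable def hypDist (z z' : ℝ × ℝ) : ℝ :=
  arcoshR (1 + ((z.1 - z'.1) ^ 2 + (z.2 - z'.2) ^ 2) / (2 * z.2 * z'.2))

/-- The heat kernel of the hyperbolic half-plane. -/
noncomputable def heatH (t : ℝ) (z z' : ℝ × ℝ) : ℝ :=
  Real.sqrt 2 / (4 * Real.pi * t) ^ ((3 : ℝ) / 2) * Real.exp (-t / 4) *
    ∫ s in Set.Ioi (hypDist z z'),
      s * Real.exp (-s ^ 2 / (4 * t)) / Real.sqrt (Real.cosh s - Real.cosh (hypDist z z'))

/-- The function `f(t) = e^{t/4} t^{3/2}`. -/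
noncomputable def fdiag (t : ℝ) : ℝ := Real.exp (t / 4) * t ^ ((3 : ℝ) / 2)

/-!
For `0 ≤ r ≤ s` one has `cosh s - cosh r ≥ (s² - r²) / 2`, so the integral in the heat kernel is
at most `√2 ∫_r^∞ s e^{-s²/4t} (s² - r²)^{-1/2} ds`. The substitution `s = √(w² + r²)` turns this
into the Gaussian integral `e^{-r²/4t} ∫_0^∞ e^{-w²/4t} dw = e^{-r²/4t} √(πt)`, whence
`H(t, z, z') ≤ (4π)⁻¹ t⁻¹ e^{-t/4} e^{-d_g(z, z')²/4t}`: the bound with `K = 1/(4π)`, `γ = 1`,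
`α = 1/4`.
-/

namespace Real

theorem sq_sub_sq_le_two_mul_cosh_sub_cosh {r s : ℝ} (hr : 0 ≤ r) (hrs : r ≤ s) :
    s ^ 2 - r ^ 2 ≤ 2 * (cosh s - cosh r) := by
  have hsum : (s + r) / 2 ≤ sinh ((s + r) / 2) := self_le_sinh_iff.mpr (by linarith)
  have hdiff : (s - r) / 2 ≤ sinh ((s - r) / 2) := self_le_sinh_iff.mpr (by linarith)
  -- `cosh s - cosh r = 2 sinh ((s + r) / 2) sinh ((s - r) / 2)`
  have hcosh_s := cosh_add ((s + r) / 2) ((s - r) / 2)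
  have hcosh_r := cosh_sub ((s + r) / 2) ((s - r) / 2)
  rw [show (s + r) / 2 + (s - r) / 2 = s by ring] at hcosh_s
  rw [show (s + r) / 2 - (s - r) / 2 = r by ring] at hcosh_r
  nlinarith [mul_le_mul hsum hdiff (by linarith) (by linarith)]

end Real

section SqrtSubstitution

variable {r : ℝ}

theorem image_sqrt_sq_add_sq_Ioi (hr : 0 ≤ r) :
    (fun w : ℝ => √(w ^ 2 + r ^ 2)) '' Ioi 0 = Ioi r := by
  ext s
  constructor
  · rintro ⟨w, hw, rfl⟩
    exact lt_sqrt_of_sq_lt (by nlinarith [mem_Ioi.mp hw])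
  · intro hs
    have hs : r < s := hs
    refine ⟨√(s ^ 2 - r ^ 2), sqrt_pos.mpr (by nlinarith), ?_⟩
    dsimp only
    rw [sq_sqrt (by nlinarith), sub_add_cancel, sqrt_sq (by linarith)]

theorem hasDerivAt_sqrt_sq_add_sq {w : ℝ} (hw : w ≠ 0) :
    HasDerivAt (fun w : ℝ => √(w ^ 2 + r ^ 2)) (w / √(w ^ 2 + r ^ 2)) w := by
  convert ((hasDerivAt_pow 2 w).add_const (r ^ 2)).sqrt (by positivity) using 1
  ring

theorem injOn_sqrt_sq_add_sq : InjOn (fun w : ℝ => √(w ^ 2 + r ^ 2)) (Ioi 0) := by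
  intro v hv w hw h
  have := sqrt_inj (by positivity) (by positivity) |>.mp h
  nlinarith [mem_Ioi.mp hv, mem_Ioi.mp hw]

theorem abs_deriv_smul_comp_sqrt_sq_add_sq {c w : ℝ} (hw : 0 < w) :
    |w / √(w ^ 2 + r ^ 2)| • (fun s => s * exp (-s ^ 2 / c) / √(s ^ 2 - r ^ 2)) (√(w ^ 2 + r ^ 2))
      = exp (-r ^ 2 / c) * exp (-c⁻¹ * w ^ 2) := by
  have hρ : 0 < √(w ^ 2 + r ^ 2) := sqrt_pos.mpr (by positivity)
  simp only [smul_eq_mul]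
  rw [abs_of_pos (div_pos hw hρ), sq_sqrt (by positivity), add_sub_cancel_right,
    sqrt_sq hw.le, ← exp_add]
  field_simp
  ring_nf

theorem integrableOn_and_integral_Ioi_mul_exp_div_sqrt_sq_sub_sq (hr : 0 ≤ r) {c : ℝ}
    (hc : 0 < c) :
    IntegrableOn (fun s => s * exp (-s ^ 2 / c) / √(s ^ 2 - r ^ 2)) (Ioi r) ∧
      ∫ s in Ioi r, s * exp (-s ^ 2 / c) / √(s ^ 2 - r ^ 2) = exp (-r ^ 2 / c) * (√(π * c) / 2) := by
  have hderiv : ∀ w ∈ Ioi (0 : ℝ), HasDerivWithinAt (fun w : ℝ => √(w ^ 2 + r ^ 2))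
      (w / √(w ^ 2 + r ^ 2)) (Ioi 0) w :=
    fun w hw => (hasDerivAt_sqrt_sq_add_sq (ne_of_gt hw)).hasDerivWithinAt
  have hcongr : EqOn (fun w => |w / √(w ^ 2 + r ^ 2)| •
      (fun s => s * exp (-s ^ 2 / c) / √(s ^ 2 - r ^ 2)) (√(w ^ 2 + r ^ 2)))
      (fun w => exp (-r ^ 2 / c) * exp (-c⁻¹ * w ^ 2)) (Ioi 0) :=
    fun w hw => abs_deriv_smul_comp_sqrt_sq_add_sq hw
  rw [← image_sqrt_sq_add_sq_Ioi hr]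
  constructor
  · rw [integrableOn_image_iff_integrableOn_abs_deriv_smul measurableSet_Ioi hderiv
      injOn_sqrt_sq_add_sq, integrableOn_congr_fun hcongr measurableSet_Ioi]
    exact ((integrable_exp_neg_mul_sq (inv_pos.mpr hc)).const_mul _).integrableOn
  · rw [integral_image_eq_integral_abs_deriv_smul measurableSet_Ioi hderiv
      injOn_sqrt_sq_add_sq, setIntegral_congr_fun measurableSet_Ioi hcongr,
      integral_const_mul, integral_gaussian_Ioi, div_inv_eq_mul]

end SqrtSubstitution

theorem div_sqrt_cosh_sub_cosh_le {a r s : ℝ} (ha : 0 ≤ a) (hr : 0 ≤ r) (hrs : r < s) :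
    a / √(cosh s - cosh r) ≤ √2 * (a / √(s ^ 2 - r ^ 2)) := by
  have hsq : 0 < s ^ 2 - r ^ 2 := by nlinarith
  calc a / √(cosh s - cosh r) ≤ a / √((s ^ 2 - r ^ 2) / 2) :=
        div_le_div_of_nonneg_left ha (sqrt_pos.mpr (by positivity)) (sqrt_le_sqrt (by
          linarith [sq_sub_sq_le_two_mul_cosh_sub_cosh hr hrs.le]))
    _ = √2 * (a / √(s ^ 2 - r ^ 2)) := by
        rw [sqrt_div' _ zero_le_two]
        field_simp

theorem integral_Ioi_mul_exp_div_sqrt_cosh_sub_cosh_le {r c : ℝ} (hr : 0 ≤ r) (hc : 0 < c) :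
    ∫ s in Ioi r, s * exp (-s ^ 2 / c) / √(cosh s - cosh r) ≤
      √2 * (exp (-r ^ 2 / c) * (√(π * c) / 2)) := by
  obtain ⟨hint, hval⟩ := integrableOn_and_integral_Ioi_mul_exp_div_sqrt_sq_sub_sq hr hc
  rw [← hval, ← integral_const_mul]
  refine integral_mono_of_nonneg ?_ (hint.const_mul _) ?_
  · filter_upwards [ae_restrict_mem measurableSet_Ioi] with s (hs : r < s)
    have : 0 ≤ s := hr.trans hs.le
    positivity
  · filter_upwards [ae_restrict_mem measurableSet_Ioi] with s (hs : r < s)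
    exact div_sqrt_cosh_sub_cosh_le (by have : 0 ≤ s := hr.trans hs.le; positivity) hr hs

theorem hypDist_nonneg {z z' : ℝ × ℝ} (hz : z ∈ H2) (hz' : z' ∈ H2) : 0 ≤ hypDist z z' := by
  have : 0 < 2 * z.2 * z'.2 := by have := hz.out; have := hz'.out; positivity
  exact arcosh_nonneg (le_add_of_nonneg_right (by positivity))

/-- Gaussian upper bound for the hyperbolic heat kernel. -/
theorem heat_kernel_gaussian_upper_bound :
    ∃ K > 0, ∃ γ > 0, ∃ α > 0, ∀ t : ℝ, 0 < t → ∀ z z' : ℝ × ℝ, z ∈ H2 → z' ∈ H2 →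
      heatH t z z' ≤
        K * (Real.sqrt (γ * t) / fdiag (γ * t)) *
          Real.exp (-α * (hypDist z z') ^ 2 / t) := by
  refine ⟨(4 * π)⁻¹, by positivity, 1, one_pos, 1 / 4, by norm_num, fun t ht z z' hz hz' => ?_⟩
  set r := hypDist z z'
  have h4π : (4 * π) ^ ((3 : ℝ) / 2) = 4 * π * √(4 * π) := by
    rw [sqrt_eq_rpow, ← rpow_one_add' (by positivity) (by norm_num)]
    norm_num
  calc heatH t z z'
      ≤ √2 / (4 * π * t) ^ ((3 : ℝ) / 2) * exp (-t / 4) *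
          (√2 * (exp (-r ^ 2 / (4 * t)) * (√(π * (4 * t)) / 2))) := by
        unfold heatH
        gcongr
        exact integral_Ioi_mul_exp_div_sqrt_cosh_sub_cosh_le (hypDist_nonneg hz hz') (by positivity)
    _ = (4 * π)⁻¹ * (√(1 * t) / fdiag (1 * t)) * exp (-(1 / 4) * r ^ 2 / t) := by
        have hexp : -r ^ 2 / (4 * t) = -(1 / 4) * r ^ 2 / t := by ring
        have hπt : √(π * (4 * t)) = √(4 * π) * √t := by
          rw [← sqrt_mul (by positivity)]
          ring_nf
        rw [fdiag, one_mul, mul_rpow (by positivity) ht.le, h4π, hexp, hπt,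
          show -t / 4 = -(t / 4) by ring, exp_neg]
        field_simp
        rw [sq_sqrt zero_le_two]
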